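/- arXiv:2411.18951 — 2 statements merged into one kernel-verified Lean document; each statement's English description precedes it below -/
import Mathlib

section
/- Let r : [0,L] × [0,T) → ℝ be a C² solution (periodic in u) of r_t = r_uu/v + r_u (k r)_u/(v(1 - k r)) - C r, where v = (1 - k r)² + (r_u)² > 0 and C > 0. Suppose r₂ ≥ 0 is a constant with r(u,0) < r₂ for all u, and 1 - k(u) r(u,t) > 0 throughout. Then r(u,t) < r₂ e^{-C t} for all (u,t). -/
open Set Filter Topology


/-- Second derivative test at a global max. -/
lemma secondDerivNonposAux {f : ℝ → ℝ} (hf : ContDiff ℝ 2 f) {a : ℝ}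
    (hmax : ∀ x, f x ≤ f a) : deriv (deriv f) a ≤ 0 := by
  by_contra hq
  push_neg at hq
  have hf0 : deriv f a = 0 := IsLocalMax.deriv_eq_zero (Filter.Eventually.of_forall hmax)
  have hd1 : Differentiable ℝ f := hf.differentiable two_ne_zero
  have hfd : ContDiff ℝ 1 (deriv f) := by
    have := (contDiff_succ_iff_deriv (n := 1)).1 (by exact_mod_cast hf)
    exact this.2.2
  have hdd : HasDerivAt (deriv f) (deriv (deriv f) a) a :=
    ((hfd.differentiable one_ne_zero) a).hasDerivAt
  have hslope := hasDerivAt_iff_tendsto_slope.1 hdd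
  have h2 : ∀ᶠ x in 𝓝[≠] a, 0 < slope (deriv f) a x := hslope.eventually (lt_mem_nhds hq)
  have h3 : ∀ᶠ x in 𝓝[>] a, 0 < slope (deriv f) a x :=
    h2.filter_mono (nhdsWithin_mono a fun x hx => hx.ne')
  have hpos : ∀ᶠ x in 𝓝[>] a, 0 < deriv f x := by
    filter_upwards [h3, self_mem_nhdsWithin] with x hx hxa
    have hxa' : 0 < x - a := sub_pos.2 hxa
    have hx' : 0 < (deriv f x - deriv f a) / (x - a) := by
      simpa [slope_def_field] using hx
    rw [hf0, sub_zero] at hx'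
    have := mul_pos hx' hxa'
    rwa [div_mul_cancel₀ _ hxa'.ne'] at this
  obtain ⟨b, hb, hsub⟩ := mem_nhdsGT_iff_exists_Ioo_subset.1 hpos
  have hab : a < b := hb
  have hmono : StrictMonoOn f (Set.Icc a b) :=
    strictMonoOn_of_deriv_pos (convex_Icc a b) hd1.continuous.continuousOn
      (by rw [interior_Icc]; exact fun x hx => hsub hx)
  have hlt : f a < f ((a + b) / 2) :=
    hmono ⟨le_refl a, hab.le⟩ ⟨by linarith, by linarith⟩ (by linarith)
  exact absurd (hmax ((a + b) / 2)) (not_le.2 hlt)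

lemma barrierAux
    (L T C : ℝ) (hL : 0 < L) (hC : 0 < C)
    (k : ℝ → ℝ)
    (r : ℝ → ℝ → ℝ)
    (hreg : ContDiff ℝ 2 (fun p : ℝ × ℝ => r p.1 p.2))
    (hper : ∀ u t, r (u + L) t = r u t)
    (hpos : ∀ u t, 0 ≤ t → t < T →
      0 < (1 - k u * r u t) ^ 2 + (deriv (fun x => r x t) u) ^ 2)
    (hEq : ∀ u t, 0 ≤ t → t < T →
      deriv (fun s => r u s) t =
        deriv (fun x => deriv (fun y => r y t) x) u /
          ((1 - k u * r u t) ^ 2 + (deriv (fun x => r x t) u) ^ 2)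
        + deriv (fun x => r x t) u * deriv (fun x => k x * r x t) u /
          (((1 - k u * r u t) ^ 2 + (deriv (fun x => r x t) u) ^ 2)
            * (1 - k u * r u t))
        - C * r u t)
    (ρ η : ℝ) (hη : 0 < η)
    (hinit : ∀ u, r u 0 < ρ + η) :
    ∀ u t, 0 ≤ t → t < T → r u t < ρ * Real.exp (-C * t) + η := by
  set φ : ℝ → ℝ := fun s => ρ * Real.exp (-C * s) + η with hφdef
  have hrc : Continuous fun p : ℝ × ℝ => r p.1 p.2 := hreg.continuous
  have hφc : Continuous φ := by
    exact (continuous_const.mul (Real.continuous_exp.comp (continuous_const.mul continuous_id))).add continuous_const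
  have hred : ∀ u t, ∃ u' ∈ Set.Icc (0:ℝ) L, r u' t = r u t := by
    intro u t
    have hp : Function.Periodic (fun x => r x t) L := fun x => hper x t
    exact ⟨u - ⌊u / L⌋ * L,
      ⟨Int.sub_floor_div_mul_nonneg u hL, (Int.sub_floor_div_mul_lt u hL).le⟩,
      hp.sub_int_mul_eq ⌊u / L⌋⟩
  by_contra hcon
  push_neg at hcon
  obtain ⟨u₀, t₀, ht₀0, ht₀T, hge⟩ := hcon
  obtain ⟨u₀', hu₀'mem, hu₀'⟩ := hred u₀ t₀
  set K : Set (ℝ × ℝ) := (Set.Icc 0 L ×ˢ Set.Icc 0 t₀) ∩ {p | φ p.2 ≤ r p.1 p.2} with hKdef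
  have hKc : IsCompact K :=
    (isCompact_Icc.prod isCompact_Icc).inter_right
      (isClosed_le (hφc.comp continuous_snd) hrc)
  set A : Set ℝ := Prod.snd '' K with hAdef
  have hAne : A.Nonempty :=
    ⟨t₀, ⟨(u₀', t₀), ⟨⟨hu₀'mem, ⟨ht₀0, le_refl t₀⟩⟩, by
      simp only [mem_setOf_eq]; rw [hu₀']; exact hge⟩, rfl⟩⟩
  have hAclosed : IsClosed A := (hKc.image continuous_snd).isClosed
  have hAbdd : BddBelow A := ⟨0, fun t ht => by
    obtain ⟨p, hpK, rfl⟩ := ht; exact hpK.1.2.1⟩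
  set t₁ := sInf A with ht₁def
  have ht₁A : t₁ ∈ A := hAclosed.csInf_mem hAne hAbdd
  obtain ⟨p₁, hp₁K, hp₁2⟩ := ht₁A
  have ht₁0 : 0 ≤ t₁ := hp₁2 ▸ hp₁K.1.2.1
  have ht₁t₀ : t₁ ≤ t₀ := hp₁2 ▸ hp₁K.1.2.2
  have ht₁T : t₁ < T := lt_of_le_of_lt ht₁t₀ ht₀T
  -- strictly below the barrier before t₁
  have hbefore : ∀ v ∈ Set.Icc (0:ℝ) L, ∀ s, 0 ≤ s → s < t₁ → r v s < φ s := by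
    intro v hv s hs0 hst₁
    by_contra hle
    push_neg at hle
    have hsA : s ∈ A := ⟨(v, s), ⟨⟨hv, ⟨hs0, hst₁.le.trans ht₁t₀⟩⟩, hle⟩, rfl⟩
    exact absurd (csInf_le hAbdd hsA) (not_le.2 hst₁)
  -- t₁ is positive
  have ht₁pos : 0 < t₁ := by
    rcases ht₁0.lt_or_eq with h | h
    · exact h
    · exfalso
      have h0 : φ (0:ℝ) ≤ r p₁.1 0 := by
        have h2 := hp₁K.2
        simp only [Set.mem_setOf_eq] at h2
        rw [hp₁2, ← h] at h2
        exact h2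
      have : φ (0:ℝ) = ρ + η := by simp [hφdef]
      exact absurd (hinit p₁.1) (not_lt.2 (by rw [← this]; exact h0))
  -- at time t₁ everything is (weakly) below the barrier
  have hatt₁ : ∀ v ∈ Set.Icc (0:ℝ) L, r v t₁ ≤ φ t₁ := by
    intro v hv
    have hcv : Continuous fun s => φ s - r v s :=
      hφc.sub (hrc.comp (continuous_const.prodMk continuous_id))
    have htend : Tendsto (fun s => φ s - r v s) (𝓝[<] t₁) (𝓝 (φ t₁ - r v t₁)) :=
      (hcv.tendsto t₁).mono_left nhdsWithin_le_nhds
    have hev : ∀ᶠ s in 𝓝[<] t₁, 0 ≤ φ s - r v s := by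
      filter_upwards [Ioo_mem_nhdsLT_of_mem (⟨ht₁pos, le_refl t₁⟩ : t₁ ∈ Set.Ioc 0 t₁)]
        with s hs
      exact (sub_pos.2 (hbefore v hv s hs.1.le hs.2)).le
    have := ge_of_tendsto htend hev
    linarith
  have hglobal : ∀ v, r v t₁ ≤ φ t₁ := by
    intro v
    obtain ⟨v', hv', he⟩ := hred v t₁
    rw [← he]; exact hatt₁ v' hv'
  set u₁ := p₁.1 with hu₁def
  have hu₁eq : r u₁ t₁ = φ t₁ := by
    refine le_antisymm (hglobal u₁) ?_
    have h2 := hp₁K.2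
    simp only [Set.mem_setOf_eq] at h2
    rwa [hp₁2] at h2
  have hmax : ∀ v, r v t₁ ≤ r u₁ t₁ := fun v => (hglobal v).trans hu₁eq.ge
  -- spatial derivatives at (u₁, t₁)
  have hfx : ContDiff ℝ 2 (fun x => r x t₁) :=
    hreg.comp (contDiff_id.prodMk contDiff_const)
  have hru : deriv (fun x => r x t₁) u₁ = 0 :=
    IsLocalMax.deriv_eq_zero (Filter.Eventually.of_forall hmax)
  have hruu : deriv (fun x => deriv (fun y => r y t₁) x) u₁ ≤ 0 :=
    secondDerivNonposAux hfx hmax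
  -- time derivative comparison at (u₁, t₁)
  have hφd : HasDerivAt φ (ρ * (Real.exp (-C * t₁) * (-C))) t₁ := by
    have h1 : HasDerivAt (fun s : ℝ => -C * s) (-C) t₁ := by
      simpa using (hasDerivAt_id t₁).const_mul (-C)
    exact ((Real.hasDerivAt_exp (-C * t₁)).comp t₁ h1).const_mul ρ |>.add_const η
  have hrt : HasDerivAt (fun s => r u₁ s) (deriv (fun s => r u₁ s) t₁) t₁ := by
    have hct : ContDiff ℝ 2 (fun s => r u₁ s) := hreg.comp (contDiff_const.prodMk contDiff_id)
    exact ((hct.differentiable two_ne_zero) t₁).hasDerivAt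
  set rt := deriv (fun s => r u₁ s) t₁ with hrtdef
  set φ' := ρ * (Real.exp (-C * t₁) * (-C)) with hφ'def
  have hh : HasDerivAt (fun s => φ s - r u₁ s) (φ' - rt) t₁ := hφd.sub hrt
  have hslope := hasDerivAt_iff_tendsto_slope.1 hh
  have hslope' : Tendsto (slope (fun s => φ s - r u₁ s) t₁) (𝓝[<] t₁) (𝓝 (φ' - rt)) :=
    hslope.mono_left (nhdsWithin_mono t₁ fun x hx => hx.ne)
  have hderiv_le : φ' - rt ≤ 0 := by
    refine le_of_tendsto hslope' ?_
    filter_upwards [Ioo_mem_nhdsLT_of_mem (⟨ht₁pos, le_refl t₁⟩ : t₁ ∈ Set.Ioc 0 t₁)]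
      with s hs
    have h1 : 0 ≤ φ s - r u₁ s := by
      obtain ⟨v', hv', he⟩ := hred u₁ s
      have := hbefore v' hv' s hs.1.le hs.2
      rw [he] at this
      linarith
    have h2 : φ t₁ - r u₁ t₁ = 0 := by rw [hu₁eq]; ring
    have h3 : s - t₁ < 0 := sub_neg.2 hs.2
    have : slope (fun s => φ s - r u₁ s) t₁ s
        = ((φ s - r u₁ s) - (φ t₁ - r u₁ t₁)) / (s - t₁) := by
      simp [slope_def_field]
    rw [this, h2, sub_zero]
    exact div_nonpos_of_nonneg_of_nonpos h1 h3.le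
  -- the PDE at (u₁, t₁)
  have heq := hEq u₁ t₁ ht₁0 ht₁T
  rw [hru] at heq
  simp only [zero_mul, zero_div, add_zero, ne_eq, OfNat.ofNat_ne_zero,
    not_false_eq_true, zero_pow] at heq
  have hv := hpos u₁ t₁ ht₁0 ht₁T
  rw [hru] at hv
  simp only [ne_eq, OfNat.ofNat_ne_zero, not_false_eq_true, zero_pow, add_zero] at hv
  have hdiv : deriv (fun x => deriv (fun y => r y t₁) x) u₁ / (1 - k u₁ * r u₁ t₁) ^ 2 ≤ 0 :=
    div_nonpos_of_nonpos_of_nonneg hruu hv.le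
  have hCr : C * r u₁ t₁ = C * (ρ * Real.exp (-C * t₁) + η) := by rw [hu₁eq]
  have h5 : rt ≤ -C * (ρ * Real.exp (-C * t₁) + η) := by linarith [heq, hdiv, hCr]
  have h6 : ρ * (Real.exp (-C * t₁) * (-C)) ≤ -C * (ρ * Real.exp (-C * t₁) + η) := by
    have h7 : φ' ≤ rt := by linarith [hderiv_le]
    exact le_trans h7 h5
  have hring : -C * (ρ * Real.exp (-C * t₁) + η)
      = ρ * (Real.exp (-C * t₁) * (-C)) - C * η := by ring
  have hCη : 0 < C * η := mul_pos hC hη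
  linarith


/-- upper barrier for the graphical target flow. -/
theorem stmt_5
    (L T C : ℝ) (hL : 0 < L) (hT : 0 < T) (hC : 0 < C)
    (k : ℝ → ℝ) (hk : ContDiff ℝ (⊤ : ℕ∞) k) (hkper : ∀ u, k (u + L) = k u)
    (r : ℝ → ℝ → ℝ)
    (hreg : ContDiff ℝ 2 (fun p : ℝ × ℝ => r p.1 p.2))
    (hper : ∀ u t, r (u + L) t = r u t)
    (hpos : ∀ u t, 0 ≤ t → t < T →
      0 < (1 - k u * r u t) ^ 2 + (deriv (fun x => r x t) u) ^ 2)
    (htube : ∀ u t, 0 ≤ t → t < T → 0 < 1 - k u * r u t)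
    (hEq : ∀ u t, 0 ≤ t → t < T →
      deriv (fun s => r u s) t =
        deriv (fun x => deriv (fun y => r y t) x) u /
          ((1 - k u * r u t) ^ 2 + (deriv (fun x => r x t) u) ^ 2)
        + deriv (fun x => r x t) u * deriv (fun x => k x * r x t) u /
          (((1 - k u * r u t) ^ 2 + (deriv (fun x => r x t) u) ^ 2)
            * (1 - k u * r u t))
        - C * r u t)
    (r₂ : ℝ) (hr₂ : 0 ≤ r₂)
    (hinit : ∀ u, r u 0 < r₂) :
    ∀ u t, 0 ≤ t → t < T → r u t < r₂ * Real.exp (-C * t) := by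
  have hc0 : Continuous fun u => r u 0 :=
    hreg.continuous.comp (continuous_id.prodMk continuous_const)
  obtain ⟨ustar, hustarmem, hustarmax⟩ :=
    isCompact_Icc.exists_isMaxOn (Set.nonempty_Icc.2 hL.le) hc0.continuousOn
  set M := r ustar 0 with hMdef
  have hM : ∀ u, r u 0 ≤ M := by
    intro u
    have hp : Function.Periodic (fun x => r x 0) L := fun x => hper x 0
    have h1 : r (u - ⌊u / L⌋ * L) 0 = r u 0 := hp.sub_int_mul_eq ⌊u / L⌋
    have h2 : u - ⌊u / L⌋ * L ∈ Set.Icc (0:ℝ) L :=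
      ⟨Int.sub_floor_div_mul_nonneg u hL, (Int.sub_floor_div_mul_lt u hL).le⟩
    rw [← h1]
    exact hustarmax h2
  have hMr₂ : M < r₂ := hinit ustar
  set ρ := (M + r₂) / 2 with hρdef
  have hρ2 : ρ < r₂ := by rw [hρdef]; linarith
  intro u t ht htT
  have key : ∀ η, 0 < η → r u t < ρ * Real.exp (-C * t) + η := by
    intro η hη
    exact barrierAux L T C hL hC k r hreg hper hpos hEq ρ η hη
      (fun v => by have := hM v; rw [hρdef]; linarith) u t ht htT
  have hle : r u t ≤ ρ * Real.exp (-C * t) := by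
    by_contra hlt
    push_neg at hlt
    have := key ((r u t - ρ * Real.exp (-C * t)) / 2) (by linarith)
    linarith
  calc r u t ≤ ρ * Real.exp (-C * t) := hle
    _ < r₂ * Real.exp (-C * t) := by
        exact mul_lt_mul_of_pos_right hρ2 (Real.exp_pos _)
end

section
/- Under the same hypotheses, if r₁ ≤ 0 is a constant with r₁ < r(u,0) for all u, then r(u,t) > r₁ e^{-C t} for all (u,t). -/
open Set Filter Topology

/-- If `ψ` has a derivative at `t₀` and attains its minimum over `[a, t₀]` at `t₀` with
`a < t₀`, then the derivative is nonpositive. -/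
lemma deriv_nonpos_of_min_right {ψ : ℝ → ℝ} {a t₀ d : ℝ} (ha : a < t₀)
    (hd : HasDerivAt ψ d t₀) (hmin : ∀ s ∈ Set.Icc a t₀, ψ t₀ ≤ ψ s) : d ≤ 0 := by
  have hslope : Tendsto (slope ψ t₀) (𝓝[<] t₀) (𝓝 d) :=
    (hasDerivAt_iff_tendsto_slope.mp hd).mono_left
      (nhdsWithin_mono _ (fun x hx => ne_of_lt hx))
  refine le_of_tendsto hslope ?_
  filter_upwards [Ioo_mem_nhdsLT_of_mem (⟨ha, le_refl _⟩ : t₀ ∈ Set.Ioc a t₀)] with x hx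
  have hnum : 0 ≤ ψ x - ψ t₀ := sub_nonneg.mpr (hmin x ⟨hx.1.le, hx.2.le⟩)
  have hden : x - t₀ ≤ 0 := sub_nonpos.mpr hx.2.le
  simpa [slope_def_field, div_eq_mul_inv] using div_nonpos_of_nonneg_of_nonpos hnum hden

/-- Second derivative test at a global minimum. -/
lemma second_deriv_nonneg_of_min {f : ℝ → ℝ} (hf : ContDiff ℝ 2 f) {u₀ : ℝ}
    (hmin : ∀ x, f u₀ ≤ f x) : 0 ≤ deriv (deriv f) u₀ := by
  have h2 : ContDiff ℝ (1 + 1) f := by norm_num; exact hf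
  have hdiff : Differentiable ℝ f := (contDiff_succ_iff_deriv.mp h2).1
  have hd1 : ContDiff ℝ 1 (deriv f) := (contDiff_succ_iff_deriv.mp h2).2.2
  have hd1d : Differentiable ℝ (deriv f) := hd1.differentiable one_ne_zero
  have hder0 : deriv f u₀ = 0 :=
    (IsLocalMin.deriv_eq_zero (Filter.Eventually.of_forall hmin : IsLocalMin f u₀))
  by_contra hneg
  push_neg at hneg
  have hD : HasDerivAt (deriv f) (deriv (deriv f) u₀) u₀ := (hd1d u₀).hasDerivAt
  have hslope : Tendsto (slope (deriv f) u₀) (𝓝[>] u₀) (𝓝 (deriv (deriv f) u₀)) :=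
    (hasDerivAt_iff_tendsto_slope.mp hD).mono_left
      (nhdsWithin_mono _ (fun x hx => ne_of_gt hx))
  have hev : ∀ᶠ x in 𝓝[>] u₀, slope (deriv f) u₀ x < 0 :=
    hslope.eventually_lt_const hneg
  obtain ⟨u', hu', hsub⟩ := mem_nhdsGT_iff_exists_Ioo_subset.mp hev
  have hderneg : ∀ x ∈ Set.Ioo u₀ u', deriv f x < 0 := by
    intro x hx
    have hs := hsub hx
    simp only [slope_def_field, hder0] at hs
    have hxpos : 0 < x - u₀ := sub_pos.mpr hx.1
    have : deriv f x - 0 < 0 := by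
      have := (div_neg_iff).mp (by simpa [div_eq_mul_inv] using hs)
      rcases this with ⟨h1, h2⟩ | ⟨h1, h2⟩
      · linarith
      · linarith
    linarith
  have hanti : StrictAntiOn f (Set.Icc u₀ u') := by
    apply strictAntiOn_of_deriv_neg (convex_Icc _ _) (hdiff.continuous.continuousOn)
    intro x hx
    rw [interior_Icc] at hx
    exact hderneg x hx
  have hlt : f u' < f u₀ := hanti ⟨le_refl _, hu'.out.le⟩ ⟨hu'.out.le, le_refl _⟩ hu'.out
  exact absurd (hmin u') (not_le.mpr hlt)

/-- lower barrier for the graphical target flow. -/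
theorem stmt_6
    (L T C : ℝ) (hL : 0 < L) (hT : 0 < T) (hC : 0 < C)
    (k : ℝ → ℝ) (hk : ContDiff ℝ (⊤ : ℕ∞) k) (hkper : ∀ u, k (u + L) = k u)
    (r : ℝ → ℝ → ℝ)
    (hreg : ContDiff ℝ 2 (fun p : ℝ × ℝ => r p.1 p.2))
    (hper : ∀ u t, r (u + L) t = r u t)
    (hpos : ∀ u t, 0 ≤ t → t < T →
      0 < (1 - k u * r u t) ^ 2 + (deriv (fun x => r x t) u) ^ 2)
    (htube : ∀ u t, 0 ≤ t → t < T → 0 < 1 - k u * r u t)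
    (hEq : ∀ u t, 0 ≤ t → t < T →
      deriv (fun s => r u s) t =
        deriv (fun x => deriv (fun y => r y t) x) u /
          ((1 - k u * r u t) ^ 2 + (deriv (fun x => r x t) u) ^ 2)
        + deriv (fun x => r x t) u * deriv (fun x => k x * r x t) u /
          (((1 - k u * r u t) ^ 2 + (deriv (fun x => r x t) u) ^ 2)
            * (1 - k u * r u t))
        - C * r u t)
    (r₁ : ℝ) (hr₁ : r₁ ≤ 0)
    (hinit : ∀ u, r₁ < r u 0) :
    ∀ u t, 0 ≤ t → t < T → r₁ * Real.exp (-C * t) < r u t := by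
  have hslicex : ∀ t, ContDiff ℝ 2 (fun x => r x t) := fun t =>
    hreg.comp (contDiff_id.prodMk contDiff_const)
  have hslicet : ∀ u, ContDiff ℝ 2 (fun s => r u s) := fun u =>
    hreg.comp (contDiff_const.prodMk contDiff_id)
  have hperiod : ∀ t, Function.Periodic (fun x => r x t) L := fun t x => hper x t
  intro u t ht0 htT
  by_contra hcon
  push_neg at hcon
  rcases eq_or_lt_of_le ht0 with h0 | htpos
  · rw [← h0] at hcon
    simp only [mul_zero, Real.exp_zero, mul_one] at hcon
    exact absurd hcon (not_le.mpr (hinit u))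
  -- conversion to the rescaled function
  have hgub : Real.exp (C * t) * r u t ≤ r₁ := by
    have h1 : Real.exp (C * t) * r u t ≤ Real.exp (C * t) * (r₁ * Real.exp (-C * t)) :=
      mul_le_mul_of_nonneg_left hcon (Real.exp_pos _).le
    have h2 : Real.exp (C * t) * (r₁ * Real.exp (-C * t)) = r₁ := by
      rw [mul_comm r₁, ← mul_assoc, ← Real.exp_add]
      ring_nf
      simp
    linarith
  -- minimum of the initial data
  obtain ⟨x₀, hx₀mem, hx₀min⟩ := isCompact_Icc.exists_isMinOn
    (nonempty_Icc.mpr hL.le) ((hslicex 0).continuous.continuousOn)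
  have hm0all : ∀ x, r x₀ 0 ≤ r x 0 := by
    intro x
    obtain ⟨y, hy, hxy⟩ := (hperiod 0).exists_mem_Ico₀ hL x
    rw [hxy]
    exact isMinOn_iff.mp hx₀min y ⟨hy.1, hy.2.le⟩
  have hm0 : r₁ < r x₀ 0 := hinit x₀
  set ε : ℝ := (r x₀ 0 - r₁) / (2 * t) with hεdef
  have hε : 0 < ε := div_pos (by linarith) (by linarith)
  have hεt : ε * t = (r x₀ 0 - r₁) / 2 := by
    rw [hεdef, div_mul_eq_mul_div, mul_div_mul_right _ _ htpos.ne']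
  -- minimum of H over the compact box
  set H : ℝ × ℝ → ℝ := fun p => Real.exp (C * p.2) * r p.1 p.2 + ε * p.2 with hHdef
  have hHcont : Continuous H :=
    ((Real.continuous_exp.comp (continuous_const.mul continuous_snd)).mul
      hreg.continuous).add (continuous_const.mul continuous_snd)
  have hKc : IsCompact (Set.Icc (0:ℝ) L ×ˢ Set.Icc (0:ℝ) t) := isCompact_Icc.prod isCompact_Icc
  have hKne : (Set.Icc (0:ℝ) L ×ˢ Set.Icc (0:ℝ) t).Nonempty :=
    ⟨(0, 0), ⟨⟨le_refl _, hL.le⟩, ⟨le_refl _, ht0⟩⟩⟩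
  obtain ⟨⟨u₀, t₀⟩, hp₀K, hp₀min⟩ := hKc.exists_isMinOn hKne hHcont.continuousOn
  have hminK : ∀ q ∈ Set.Icc (0:ℝ) L ×ˢ Set.Icc (0:ℝ) t, H (u₀, t₀) ≤ H q :=
    isMinOn_iff.mp hp₀min
  have hu₀ : u₀ ∈ Set.Icc (0:ℝ) L := hp₀K.1
  have ht₀ : t₀ ∈ Set.Icc (0:ℝ) t := hp₀K.2
  -- the minimum value is below r x₀ 0
  have hHlt : H (u₀, t₀) < r x₀ 0 := by
    obtain ⟨y, hy, hxy⟩ := (hperiod t).exists_mem_Ico₀ hL u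
    have hyK : ((y, t) : ℝ × ℝ) ∈ Set.Icc (0:ℝ) L ×ˢ Set.Icc (0:ℝ) t :=
      ⟨⟨hy.1, hy.2.le⟩, ⟨ht0, le_refl _⟩⟩
    have h1 : H (u₀, t₀) ≤ H (y, t) := hminK _ hyK
    have h2 : H (y, t) = Real.exp (C * t) * r u t + ε * t := by
      simp only [hHdef]
      rw [← hxy]
    have h3 : Real.exp (C * t) * r u t + ε * t ≤ r₁ + (r x₀ 0 - r₁) / 2 := by
      rw [hεt]; linarith
    rw [h2] at h1
    linarith
  -- positivity of t₀
  have ht₀pos : 0 < t₀ := by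
    rcases eq_or_lt_of_le ht₀.1 with h | h
    · exfalso
      have : H (u₀, t₀) = r u₀ 0 := by
        simp only [hHdef, ← h, mul_zero, Real.exp_zero, one_mul, add_zero]
      rw [this] at hHlt
      exact absurd (hm0all u₀) (not_le.mpr hHlt)
    · exact h
  have ht₀T : t₀ < T := lt_of_le_of_lt ht₀.2 htT
  -- u₀ is a global spatial minimum at time t₀
  have hmin_u : ∀ x, r u₀ t₀ ≤ r x t₀ := by
    intro x
    obtain ⟨y, hy, hxy⟩ := (hperiod t₀).exists_mem_Ico₀ hL x
    rw [hxy]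
    have hyK : ((y, t₀) : ℝ × ℝ) ∈ Set.Icc (0:ℝ) L ×ˢ Set.Icc (0:ℝ) t :=
      ⟨⟨hy.1, hy.2.le⟩, ht₀⟩
    have h1 : H (u₀, t₀) ≤ H (y, t₀) := hminK _ hyK
    simp only [hHdef] at h1
    have hexp : (0:ℝ) < Real.exp (C * t₀) := Real.exp_pos _
    nlinarith
  have hd0 : deriv (fun x => r x t₀) u₀ = 0 :=
    IsLocalMin.deriv_eq_zero (Filter.Eventually.of_forall hmin_u)
  have hd2 : 0 ≤ deriv (deriv (fun x => r x t₀)) u₀ :=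
    second_deriv_nonneg_of_min (hslicex t₀) hmin_u
  -- time derivative of H(u₀, ·) at t₀ is nonpositive
  have hrt : HasDerivAt (fun s => r u₀ s) (deriv (fun s => r u₀ s) t₀) t₀ :=
    (((hslicet u₀).differentiable (by norm_num)) t₀).hasDerivAt
  have h1 : HasDerivAt (fun s : ℝ => C * s) C t₀ := by
    simpa using (hasDerivAt_id t₀).const_mul C
  have hψ : HasDerivAt (fun s => Real.exp (C * s) * r u₀ s + ε * s)
      (Real.exp (C * t₀) * C * r u₀ t₀
        + Real.exp (C * t₀) * deriv (fun s => r u₀ s) t₀ + ε) t₀ := by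
    have h2 := (h1.exp.mul hrt).add ((hasDerivAt_id t₀).const_mul ε)
    exact (h2 : HasDerivAt (fun s => Real.exp (C * s) * r u₀ s + ε * s) _ t₀).congr_deriv (by simp)
  have hψmin : ∀ s ∈ Set.Icc (0:ℝ) t₀,
      (fun s => Real.exp (C * s) * r u₀ s + ε * s) t₀
        ≤ (fun s => Real.exp (C * s) * r u₀ s + ε * s) s := by
    intro s hs
    exact hminK (u₀, s) ⟨hu₀, ⟨hs.1, hs.2.trans ht₀.2⟩⟩
  have hDle : Real.exp (C * t₀) * C * r u₀ t₀
      + Real.exp (C * t₀) * deriv (fun s => r u₀ s) t₀ + ε ≤ 0 :=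
    deriv_nonpos_of_min_right ht₀pos hψ hψmin
  -- use the evolution equation
  have hEqv := hEq u₀ t₀ ht₀pos.le ht₀T
  rw [hd0] at hEqv
  have hV : 0 < (1 - k u₀ * r u₀ t₀) ^ 2 + (deriv (fun x => r x t₀) u₀) ^ 2 :=
    hpos u₀ t₀ ht₀pos.le ht₀T
  rw [hd0] at hV
  have hAV : 0 ≤ deriv (fun x => deriv (fun y => r y t₀) x) u₀ /
      ((1 - k u₀ * r u₀ t₀) ^ 2 + (0:ℝ) ^ 2) := div_nonneg hd2 hV.le
  have hexp : (0:ℝ) < Real.exp (C * t₀) := Real.exp_pos _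
  rw [hEqv] at hDle
  simp only [zero_mul, zero_div, add_zero] at hDle
  have hkey : Real.exp (C * t₀) * C * r u₀ t₀
      + Real.exp (C * t₀) * (deriv (fun x => deriv (fun y => r y t₀) x) u₀ /
          ((1 - k u₀ * r u₀ t₀) ^ 2 + (0:ℝ) ^ 2) - C * r u₀ t₀) + ε
      = Real.exp (C * t₀) * (deriv (fun x => deriv (fun y => r y t₀) x) u₀ /
          ((1 - k u₀ * r u₀ t₀) ^ 2 + (0:ℝ) ^ 2)) + ε := by ring
  rw [hkey] at hDle
  have hprod : 0 ≤ Real.exp (C * t₀) * (deriv (fun x => deriv (fun y => r y t₀) x) u₀ /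
      ((1 - k u₀ * r u₀ t₀) ^ 2 + (0:ℝ) ^ 2)) := mul_nonneg hexp.le hAV
  linarith
end
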